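/- arXiv:2512.24005 — 2 statements merged into one kernel-verified Lean document; each statement's English description precedes it below -/
import Mathlib

section
/- Let μ, σ, ξ : ℝ → ℝ be continuous on [0,1], let c ≥ 0, and let D : [0,1] → ℝ be differentiable with D'(s) = 2·μ(s)·D(s) + σ(s)² + c·ξ(s)² for all s ∈ (0,1). Define G(s,t) := E(s,t)·D(s) for 0 ≤ s ≤ t ≤ 1, where E(s,t) := exp(∫_s^t μ(r) dr). Then for all 0 < s < t ≤ 1, σ(s)² + c·ξ(s)² = exp(−∫_s^t μ(r) dr)·∂_s G(s,t) − μ(s)·D(s), where ∂_s G denotes the partial derivative of G with respect to its first argument. -/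
/-!
By the fundamental theorem of calculus and the product rule,
`∂_s G(s,t) = E(s,t) * (D'(s) - μ(s) D(s))`; cancelling `E(s,t)` against `exp (-∫_s^t μ)` and
inserting the ODE for `D'` leaves `σ² + c ξ²`.
-/

open Real MeasureTheory intervalIntegral Set

theorem hasDerivAt_exp_integral_lower_mul {μ D : ℝ → ℝ} {s t d : ℝ}
    (hint : IntervalIntegrable μ volume s t) (hmeas : StronglyMeasurableAtFilter μ (nhds s))
    (hμ : ContinuousAt μ s) (hD : HasDerivAt D d s) :
    HasDerivAt (fun u => exp (∫ r in u..t, μ r) * D u)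
      (exp (∫ r in s..t, μ r) * (d - μ s * D s)) s := by
  refine ((integral_hasDerivAt_left hint hmeas hμ).exp.mul hD).congr_deriv ?_
  ring

theorem stmt_5_general (μ σ ξ D : ℝ → ℝ) (c : ℝ)
    (hμ : ContinuousOn μ (Set.Icc 0 1))
    (hD : ∀ s ∈ Set.Ioo (0:ℝ) 1,
      HasDerivAt D (2 * μ s * D s + σ s ^ 2 + c * ξ s ^ 2) s) :
    ∀ s t : ℝ, 0 < s → s < t → t ≤ 1 →
      σ s ^ 2 + c * ξ s ^ 2 =
        Real.exp (-∫ r in s..t, μ r) *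
          deriv (fun u => Real.exp (∫ r in u..t, μ r) * D u) s - μ s * D s := by
  intro s t hs hst ht1
  have hs_mem : s ∈ Ioo (0:ℝ) 1 := ⟨hs, hst.trans_le ht1⟩
  have hint : IntervalIntegrable μ volume s t :=
    (hμ.mono (by rw [uIcc_of_le hst.le]; exact Icc_subset_Icc hs.le ht1)).intervalIntegrable
  have hmeas : StronglyMeasurableAtFilter μ (nhds s) :=
    (hμ.mono Ioo_subset_Icc_self).stronglyMeasurableAtFilter isOpen_Ioo s hs_mem
  have hμs : ContinuousAt μ s := hμ.continuousAt (Icc_mem_nhds hs_mem.1 hs_mem.2)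
  rw [(hasDerivAt_exp_integral_lower_mul hint hmeas hμs (hD s hs_mem)).deriv, ← mul_assoc,
    ← Real.exp_add, neg_add_cancel, Real.exp_zero]
  ring

/-- Inversion identity (3.8) of Proposition 3.2: with `G s t = exp (∫_s^t μ) * D s` and
`D` satisfying the second-moment ODE on `(0,1)`, for all `0 < s < t ≤ 1`,
`σ s ^ 2 + c * ξ s ^ 2 = exp (−∫_s^t μ) * ∂_s G(s,t) − μ s * D s`,
where `∂_s G` is the derivative of `G` in its first argument. -/
theorem stmt_5 (μ σ ξ D : ℝ → ℝ) (c : ℝ) (hc : 0 ≤ c)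
    (hμ : ContinuousOn μ (Set.Icc 0 1))
    (hσ : ContinuousOn σ (Set.Icc 0 1))
    (hξ : ContinuousOn ξ (Set.Icc 0 1))
    (hD : ∀ s ∈ Set.Ioo (0:ℝ) 1,
      HasDerivAt D (2 * μ s * D s + σ s ^ 2 + c * ξ s ^ 2) s) :
    ∀ s t : ℝ, 0 < s → s < t → t ≤ 1 →
      σ s ^ 2 + c * ξ s ^ 2 =
        Real.exp (-∫ r in s..t, μ r) *
          deriv (fun u => Real.exp (∫ r in u..t, μ r) * D u) s - μ s * D s :=
  stmt_5_general μ σ ξ D c hμ hD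
end

section
/- Let M, C_g, C_D ≥ 0 and ε_μ, ε_g, ε_D ≥ 0. Let μ, μ̂ : ℝ → ℝ be continuous on [0,1] with |μ(r)| ≤ M and |μ̂(r)| ≤ M for all r ∈ [0,1], and |μ̂(r) − μ(r)| ≤ ε_μ for all r ∈ [0,1]. Let g, ĝ : ℝ × ℝ → ℝ be continuous on [0,1] × [0,1] with |g(t,τ)| ≤ C_g and |ĝ(t,τ) − g(t,τ)| ≤ ε_g for all (t,τ) ∈ [0,1]². Let D, D̂ : [0,1] → ℝ with |D(t)| ≤ C_D and |D̂(t) − D(t)| ≤ ε_D for all t ∈ [0,1]. Define, for t ∈ [0,1), H(t) := (1/(1−t)) · ∫_t^1 exp(−∫_t^τ μ(r) dr)·g(t,τ) dτ − μ(t)·D(t), and Ĥ(t) := (1/(1−t)) · ∫_t^1 exp(−∫_t^τ μ̂(r) dr)·ĝ(t,τ) dτ − μ̂(t)·D̂(t). Then for every t ∈ [0,1), |Ĥ(t) − H(t)| ≤ e^M·C_g·ε_μ + e^M·ε_g + (C_D + ε_D)·ε_μ + M·ε_D. -/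
/-!
The estimate splits `Ĥ(t) - H(t)` into the difference of the averaged integrals and the difference
of the products `μ̂ D̂ - μ D`. Both are perturbations of a product `a b`, bounded through
`a' b' - a b = (a' - a) b + a' (b' - b)`. In the integral the factor `a` is the discount
`exp (-∫_t^τ μ)`, whose exponent lies in `[-M, M]` because `τ - t ≤ 1`; since `exp` is
`e^M`-Lipschitz on `(-∞, M]`, the discounts differ by at most `e^M ε_μ`.
-/

open Real intervalIntegral MeasureTheory Set

theorem abs_exp_sub_exp_le_of_le {x y C : ℝ} (hx : x ≤ C) (hy : y ≤ C) :
    |exp x - exp y| ≤ exp C * |x - y| := by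
  wlog hyx : y ≤ x generalizing x y
  · rw [abs_sub_comm, abs_sub_comm x]
    exact this hy hx (le_of_not_ge hyx)
  -- `exp y = exp x * exp (y - x) ≥ exp x * (1 + y - x)`
  have hsplit : exp y = exp x * exp (y - x) := by rw [← exp_add, add_sub_cancel]
  have hlin : exp x - exp y ≤ exp x * (x - y) := by
    nlinarith [add_one_le_exp (y - x), exp_pos x]
  rw [abs_of_nonneg (sub_nonneg.2 (exp_le_exp.2 hyx)), abs_of_nonneg (sub_nonneg.2 hyx)]
  exact hlin.trans (mul_le_mul_of_nonneg_right (exp_le_exp.2 hx) (sub_nonneg.2 hyx))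

theorem abs_mul_sub_mul_le_of_le {a a' b b' A εa B εb : ℝ} (ha' : |a'| ≤ A)
    (ha : |a' - a| ≤ εa) (hb : |b| ≤ B) (hb' : |b' - b| ≤ εb) :
    |a' * b' - a * b| ≤ εa * B + A * εb :=
  calc |a' * b' - a * b| = |(a' - a) * b + a' * (b' - b)| := by congr 1; ring
    _ ≤ |a' - a| * |b| + |a'| * |b' - b| := by
      rw [← abs_mul, ← abs_mul]; exact abs_add_le _ _
    _ ≤ εa * B + A * εb := add_le_add
      (mul_le_mul ha hb (abs_nonneg _) ((abs_nonneg _).trans ha))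
      (mul_le_mul ha' hb' (abs_nonneg _) ((abs_nonneg _).trans ha'))

theorem abs_integral_le_of_abs_le_on_Icc_zero_one {f : ℝ → ℝ} {C a b : ℝ}
    (hf : ∀ x ∈ Icc (0 : ℝ) 1, |f x| ≤ C) (ha : 0 ≤ a) (hab : a ≤ b) (hb : b ≤ 1) :
    |∫ x in a..b, f x| ≤ C := by
  have hC : 0 ≤ C := (abs_nonneg _).trans (hf 0 ⟨le_rfl, zero_le_one⟩)
  calc |∫ x in a..b, f x| ≤ C * |b - a| :=
        intervalIntegral.norm_integral_le_of_norm_le_const (f := f) fun x hx => by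
          rw [uIoc_of_le hab] at hx
          exact hf x ⟨ha.trans hx.1.le, hx.2.trans hb⟩
    _ ≤ C * 1 := by
        gcongr
        rw [abs_of_nonneg (sub_nonneg.2 hab)]
        linarith
    _ = C := mul_one C

theorem abs_one_div_mul_integral_sub_le {f f' : ℝ → ℝ} {a b K : ℝ} (hab : a < b)
    (hf : IntervalIntegrable f volume a b) (hf' : IntervalIntegrable f' volume a b)
    (hK : ∀ x ∈ uIoc a b, |f' x - f x| ≤ K) :
    |1 / (b - a) * (∫ x in a..b, f' x) - 1 / (b - a) * ∫ x in a..b, f x| ≤ K := by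
  have hlen : 0 < b - a := sub_pos.2 hab
  have hint : |(∫ x in a..b, f' x) - ∫ x in a..b, f x| ≤ K * (b - a) := by
    rw [← integral_sub hf' hf, ← abs_of_pos hlen]
    exact intervalIntegral.norm_integral_le_of_norm_le_const (f := fun x => f' x - f x) hK
  rw [← mul_sub, abs_mul, abs_of_pos (one_div_pos.2 hlen), one_div_mul_eq_div,
    div_le_iff₀ hlen]
  exact hint

theorem intervalIntegrable_exp_neg_integral_mul {ν : ℝ → ℝ} {G : ℝ × ℝ → ℝ} {t : ℝ}
    (hν : ContinuousOn ν (Icc 0 1)) (hG : ContinuousOn G (Icc 0 1 ×ˢ Icc 0 1))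
    (ht : t ∈ Icc (0 : ℝ) 1) :
    IntervalIntegrable (fun τ => exp (-∫ r in t..τ, ν r) * G (t, τ)) volume t 1 := by
  have hsub : Icc t 1 ⊆ Icc 0 1 := Icc_subset_Icc ht.1 le_rfl
  have huIcc : uIcc t 1 = Icc t 1 := uIcc_of_le ht.2
  have hprimitive : ContinuousOn (fun τ => ∫ r in t..τ, ν r) (Icc t 1) := by
    rw [← huIcc]
    exact continuousOn_primitive_interval ((hν.mono hsub).integrableOn_Icc.mono_set huIcc.le)
  have hsection : ContinuousOn (fun τ => G (t, τ)) (Icc t 1) :=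
    hG.comp (Continuous.prodMk_right t).continuousOn fun τ hτ => ⟨ht, hsub hτ⟩
  apply ContinuousOn.intervalIntegrable
  rw [huIcc]
  exact (continuous_exp.comp_continuousOn hprimitive.neg).mul hsection

theorem abs_exp_neg_integral_sub_le {μ μhat : ℝ → ℝ} {M εμ t τ : ℝ}
    (hμc : ContinuousOn μ (Icc 0 1)) (hμhatc : ContinuousOn μhat (Icc 0 1))
    (hμb : ∀ r ∈ Icc (0 : ℝ) 1, |μ r| ≤ M) (hμhatb : ∀ r ∈ Icc (0 : ℝ) 1, |μhat r| ≤ M)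
    (hμerr : ∀ r ∈ Icc (0 : ℝ) 1, |μhat r - μ r| ≤ εμ)
    (ht : 0 ≤ t) (htτ : t ≤ τ) (hτ : τ ≤ 1) :
    |exp (-∫ r in t..τ, μhat r) - exp (-∫ r in t..τ, μ r)| ≤ exp M * εμ := by
  have hsub : uIcc t τ ⊆ Icc 0 1 := by
    rw [uIcc_of_le htτ]; exact Icc_subset_Icc ht hτ
  have hμhat_le := abs_integral_le_of_abs_le_on_Icc_zero_one hμhatb ht htτ hτ
  have hμ_le := abs_integral_le_of_abs_le_on_Icc_zero_one hμb ht htτ hτ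
  have hdiff : |(∫ r in t..τ, μhat r) - ∫ r in t..τ, μ r| ≤ εμ := by
    rw [← integral_sub (hμhatc.mono hsub).intervalIntegrable (hμc.mono hsub).intervalIntegrable]
    exact abs_integral_le_of_abs_le_on_Icc_zero_one hμerr ht htτ hτ
  calc _ ≤ exp M * |-(∫ r in t..τ, μhat r) - -∫ r in t..τ, μ r| :=
        abs_exp_sub_exp_le_of_le ((neg_le_abs _).trans hμhat_le) ((neg_le_abs _).trans hμ_le)
    _ ≤ exp M * εμ := by
        rw [neg_sub_neg, abs_sub_comm]
        exact mul_le_mul_of_nonneg_left hdiff (exp_pos M).le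

theorem abs_exp_neg_integral_mul_sub_le {μ μhat : ℝ → ℝ} {M εμ t τ y y' C ε : ℝ}
    (hμc : ContinuousOn μ (Icc 0 1)) (hμhatc : ContinuousOn μhat (Icc 0 1))
    (hμb : ∀ r ∈ Icc (0 : ℝ) 1, |μ r| ≤ M) (hμhatb : ∀ r ∈ Icc (0 : ℝ) 1, |μhat r| ≤ M)
    (hμerr : ∀ r ∈ Icc (0 : ℝ) 1, |μhat r - μ r| ≤ εμ)
    (ht : 0 ≤ t) (htτ : t ≤ τ) (hτ : τ ≤ 1) (hy : |y| ≤ C) (hy' : |y' - y| ≤ ε) :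
    |exp (-∫ r in t..τ, μhat r) * y' - exp (-∫ r in t..τ, μ r) * y| ≤
      exp M * C * εμ + exp M * ε := by
  have hdiscount : |exp (-∫ r in t..τ, μhat r)| ≤ exp M := by
    rw [abs_of_pos (exp_pos _), exp_le_exp]
    exact (neg_le_abs _).trans (abs_integral_le_of_abs_le_on_Icc_zero_one hμhatb ht htτ hτ)
  have := abs_mul_sub_mul_le_of_le hdiscount
    (abs_exp_neg_integral_sub_le hμc hμhatc hμb hμhatb hμerr ht htτ hτ) hy hy'
  linarith

theorem stmt_11_general (M Cg CD εμ εg εD : ℝ)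
    (μ μhat : ℝ → ℝ)
    (hμc : ContinuousOn μ (Set.Icc 0 1)) (hμhatc : ContinuousOn μhat (Set.Icc 0 1))
    (hμb : ∀ r ∈ Set.Icc (0:ℝ) 1, |μ r| ≤ M)
    (hμhatb : ∀ r ∈ Set.Icc (0:ℝ) 1, |μhat r| ≤ M)
    (hμerr : ∀ r ∈ Set.Icc (0:ℝ) 1, |μhat r - μ r| ≤ εμ)
    (g ghat : ℝ × ℝ → ℝ)
    (hgc : ContinuousOn g (Set.Icc 0 1 ×ˢ Set.Icc 0 1))
    (hghatc : ContinuousOn ghat (Set.Icc 0 1 ×ˢ Set.Icc 0 1))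
    (hgb : ∀ p ∈ Set.Icc (0:ℝ) 1 ×ˢ Set.Icc (0:ℝ) 1, |g p| ≤ Cg)
    (hgerr : ∀ p ∈ Set.Icc (0:ℝ) 1 ×ˢ Set.Icc (0:ℝ) 1, |ghat p - g p| ≤ εg)
    (D Dhat : ℝ → ℝ)
    (hDb : ∀ t ∈ Set.Icc (0:ℝ) 1, |D t| ≤ CD)
    (hDerr : ∀ t ∈ Set.Icc (0:ℝ) 1, |Dhat t - D t| ≤ εD) :
    ∀ t ∈ Set.Ico (0:ℝ) 1,
      |((1 / (1 - t)) * (∫ τ in t..1,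
          Real.exp (-∫ r in t..τ, μhat r) * ghat (t, τ)) - μhat t * Dhat t) -
       ((1 / (1 - t)) * (∫ τ in t..1,
          Real.exp (-∫ r in t..τ, μ r) * g (t, τ)) - μ t * D t)| ≤
        Real.exp M * Cg * εμ + Real.exp M * εg + (CD + εD) * εμ + M * εD := by
  rintro t ⟨ht0, ht1⟩
  have ht : t ∈ Icc (0 : ℝ) 1 := ⟨ht0, ht1.le⟩
  have hintegral := abs_one_div_mul_integral_sub_le (K := exp M * Cg * εμ + exp M * εg) ht1
    (intervalIntegrable_exp_neg_integral_mul hμc hgc ht)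
    (intervalIntegrable_exp_neg_integral_mul hμhatc hghatc ht)
    fun τ hτ => by
      rw [uIoc_of_le ht1.le] at hτ
      have hp : (t, τ) ∈ Icc (0 : ℝ) 1 ×ˢ Icc (0 : ℝ) 1 := ⟨ht, ht0.trans hτ.1.le, hτ.2⟩
      exact abs_exp_neg_integral_mul_sub_le hμc hμhatc hμb hμhatb hμerr ht0 hτ.1.le hτ.2
        (hgb _ hp) (hgerr _ hp)
  have hDhat : |Dhat t| ≤ CD + εD := by
    linarith [abs_sub_abs_le_abs_sub (Dhat t) (D t), hDerr t ht, hDb t ht]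
  have hproduct := abs_mul_sub_mul_le_of_le hDhat (hDerr t ht) (hμb t ht) (hμerr t ht)
  rw [mul_comm (μhat t), mul_comm (μ t), sub_sub_sub_comm]
  exact (abs_sub _ _).trans (by linarith)

/-- Quantitative deterministic stability bound underlying the proof of Theorem 5.3(iii):
the plug-in functional `Ĥ` built from `μ̂`, `ĝ`, `D̂` deviates from the true functional
`H` built from `μ`, `g`, `D` by at most
`e^M·C_g·ε_μ + e^M·ε_g + (C_D + ε_D)·ε_μ + M·ε_D` on `[0,1)`. -/
theorem stmt_11 (M Cg CD εμ εg εD : ℝ)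
    (hM : 0 ≤ M) (hCg : 0 ≤ Cg) (hCD : 0 ≤ CD)
    (hεμ : 0 ≤ εμ) (hεg : 0 ≤ εg) (hεD : 0 ≤ εD)
    (μ μhat : ℝ → ℝ)
    (hμc : ContinuousOn μ (Set.Icc 0 1)) (hμhatc : ContinuousOn μhat (Set.Icc 0 1))
    (hμb : ∀ r ∈ Set.Icc (0:ℝ) 1, |μ r| ≤ M)
    (hμhatb : ∀ r ∈ Set.Icc (0:ℝ) 1, |μhat r| ≤ M)
    (hμerr : ∀ r ∈ Set.Icc (0:ℝ) 1, |μhat r - μ r| ≤ εμ)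
    (g ghat : ℝ × ℝ → ℝ)
    (hgc : ContinuousOn g (Set.Icc 0 1 ×ˢ Set.Icc 0 1))
    (hghatc : ContinuousOn ghat (Set.Icc 0 1 ×ˢ Set.Icc 0 1))
    (hgb : ∀ p ∈ Set.Icc (0:ℝ) 1 ×ˢ Set.Icc (0:ℝ) 1, |g p| ≤ Cg)
    (hgerr : ∀ p ∈ Set.Icc (0:ℝ) 1 ×ˢ Set.Icc (0:ℝ) 1, |ghat p - g p| ≤ εg)
    (D Dhat : ℝ → ℝ)
    (hDb : ∀ t ∈ Set.Icc (0:ℝ) 1, |D t| ≤ CD)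
    (hDerr : ∀ t ∈ Set.Icc (0:ℝ) 1, |Dhat t - D t| ≤ εD) :
    ∀ t ∈ Set.Ico (0:ℝ) 1,
      |((1 / (1 - t)) * (∫ τ in t..1,
          Real.exp (-∫ r in t..τ, μhat r) * ghat (t, τ)) - μhat t * Dhat t) -
       ((1 / (1 - t)) * (∫ τ in t..1,
          Real.exp (-∫ r in t..τ, μ r) * g (t, τ)) - μ t * D t)| ≤
        Real.exp M * Cg * εμ + Real.exp M * εg + (CD + εD) * εμ + M * εD :=
  stmt_11_general M Cg CD εμ εg εD μ μhat hμc hμhatc hμb hμhatb hμerr g ghat hgc hghatc hgb hgerr D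
    Dhat hDb hDerr
end
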